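/- Let v_t be a wide-sense stationary ℝ^{d_y}-valued process with autocorrelation R_t = E[v_s v_{s−t}ᵀ] satisfying ‖R‖_⋆ = Σ_{t=0}^∞ t‖R_t‖_op < ∞, and let R_{−t} = R_tᵀ. Define the power spectrum Φ_v(k) = Σ_{t=−∞}^∞ R_t e^{−jω_k t} and the aliased (finite-horizon) power spectrum Φ_{v,N}(k) = E[V_k V_k*] where V_k = (1/√N) Σ_{t=0}^{N−1} v_t e^{−jω_k t} and ω_k = 2πk/N. Then sup_{k∈{0,…,N−1}} ‖Φ_v(k) − Φ_{v,N}(k)‖_op ≤ 2‖R‖_⋆ / N. -/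

import Mathlib

open MeasureTheory Matrix

/-- The continuous linear map associated with a complex square matrix
(Euclidean norms); its norm is the matrix operator norm. -/
noncomputable def matCLM {dy : ℕ} (g : Matrix (Fin dy) (Fin dy) ℂ) :
    EuclideanSpace ℂ (Fin dy) →L[ℂ] EuclideanSpace ℂ (Fin dy) :=
  LinearMap.toContinuousLinearMap (Matrix.toEuclideanLin g)

/-- The `N`-point DFT of a stochastic signal at frequency index `k`, pointwise
in the sample `ω`. -/
noncomputable def dftNoise {dy : ℕ} {Ω : Type*} (N : ℕ) (v : ℤ → Ω → Fin dy → ℝ)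
    (k : ℕ) (ω : Ω) : Fin dy → ℂ :=
  fun i => (Real.sqrt N : ℂ)⁻¹ *
    ∑ t ∈ Finset.range N,
      (v t ω i : ℂ) * Complex.exp (-((2 * Real.pi * k * t / N : ℝ) : ℂ) * Complex.I)


/-!
Because the second moments depend only on the lag,
`Φ_{v,N}(k) = (1/N) Σ_{t,s<N} e^{-jω_k(t-s)} R_{t-s}` is a Fejér average of the terms
`g u = e^{-jω_k u} R_u` of the series `Φ_v(k) = Σ_u g u`. For each `t < N` the inner sum over `s`
collects exactly the lags `u ∈ (t - N, t]`, and a fixed lag `u` is missed for at most `|u|` of the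
`N` values of `t`. Hence the error is at most `(1/N) Σ_{u ∈ ℤ} |u| ‖R_u‖ = 2‖R‖_⋆/N`, where
`‖R_{-u}‖ = ‖R_uᵀ‖ = ‖R_u‖`.
-/

open Finset ComplexConjugate

theorem norm_tsum_sub_sum_le_tsum_indicator_compl {ι E : Type*} [NormedAddCommGroup E]
    [CompleteSpace E] {g : ι → E} {b : ι → ℝ} (hb : Summable b) (hgb : ∀ i, ‖g i‖ ≤ b i)
    (J : Finset ι) :
    ‖∑' i, g i - ∑ i ∈ J, g i‖ ≤ ∑' i, (↑J : Set ι)ᶜ.indicator b i := by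
  rw [← (hb.of_norm_bounded hgb).sum_add_tsum_compl, add_sub_cancel_left, _root_.tsum_subtype]
  refine tsum_of_norm_bounded (hb.indicator _).hasSum fun i => ?_
  by_cases hi : i ∈ (↑J : Set ι)ᶜ
  · simpa [hi] using hgb i
  · simp [hi]

theorem sum_range_sub_eq_sum_Ioc {M : Type*} [AddCommMonoid M] (f : ℤ → M) (N : ℕ) (t : ℤ) :
    ∑ s ∈ range N, f (t - s) = ∑ u ∈ Ioc (t - N) t, f u :=
  sum_nbij' (fun s => t - s) (fun u => (t - u).toNat) (by simp) (by simp; omega)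
    (by simp) (by simp; omega) (fun _ _ => rfl)

theorem card_filter_notMem_Ioc_sub_le (N : ℕ) (u : ℤ) :
    #{t ∈ range N | u ∉ Ioc (((t : ℕ) : ℤ) - N) t} ≤ u.natAbs :=
  calc #{t ∈ range N | u ∉ Ioc (((t : ℕ) : ℤ) - N) t}
      ≤ #(range u.toNat ∪ Ico (N - (-u).toNat) N) := by
        refine card_le_card fun t ht => ?_
        simp only [mem_filter, mem_range, mem_Ioc, mem_union, mem_Ico] at ht ⊢
        omega
    _ ≤ u.toNat + (-u).toNat := by
        refine (card_union_le _ _).trans ?_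
        simp only [card_range, Nat.card_Ico]
        omega
    _ = u.natAbs := by omega

theorem hasSum_natAbs_mul {b : ℕ → ℝ} (hb : Summable fun m : ℕ => (m : ℝ) * b m) :
    HasSum (fun u : ℤ => (u.natAbs : ℝ) * b u.natAbs) (2 * ∑' m : ℕ, (m : ℝ) * b m) := by
  simpa [two_mul] using hb.hasSum.of_nat_of_neg (f := fun u : ℤ => (u.natAbs : ℝ) * b u.natAbs)
    (by simpa using hb.hasSum)

theorem norm_tsum_sub_inv_smul_sum_range_sub_le {𝕜 E : Type*} [RCLike 𝕜] [NormedAddCommGroup E]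
    [NormedSpace 𝕜 E] [CompleteSpace E] {g : ℤ → E} {b : ℕ → ℝ}
    (hgb : ∀ u, ‖g u‖ ≤ b u.natAbs) (hb : Summable fun m : ℕ => (m : ℝ) * b m)
    {N : ℕ} (hN : 0 < N) :
    ‖∑' u, g u - (N : 𝕜)⁻¹ • ∑ t ∈ range N, ∑ s ∈ range N, g (t - s)‖ ≤
      2 * (∑' m : ℕ, (m : ℝ) * b m) / N := by
  set B : ℤ → ℝ := fun u => b u.natAbs
  set W : ℤ → ℝ := fun u => (u.natAbs : ℝ) * b u.natAbs
  have hb0 : ∀ m, 0 ≤ b m := fun m => (norm_nonneg _).trans (by simpa using hgb m)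
  have hW : HasSum W (2 * ∑' m : ℕ, (m : ℝ) * b m) := hasSum_natAbs_mul hb
  have hBs : Summable B := by
    refine hW.summable.of_norm_bounded_eventually ?_
    filter_upwards [(Set.finite_singleton (0 : ℤ)).compl_mem_cofinite] with u hu
    have : (1 : ℝ) ≤ u.natAbs := by simp at hu; exact_mod_cast Int.natAbs_pos.2 hu
    simpa [B, W, abs_of_nonneg (hb0 _)] using le_mul_of_one_le_left (hb0 _) this
  set I : ℕ → Finset ℤ := fun t => Ioc ((t : ℤ) - N) t
  have hdiag : ∀ t ∈ range N, ‖∑' u, g u - ∑ s ∈ range N, g (t - s)‖ ≤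
      ∑' u, (↑(I t) : Set ℤ)ᶜ.indicator B u := fun t _ => by
    rw [sum_range_sub_eq_sum_Ioc]
    exact norm_tsum_sub_sum_le_tsum_indicator_compl hBs hgb _
  have hcount : ∑ t ∈ range N, ∑' u, (↑(I t) : Set ℤ)ᶜ.indicator B u ≤ ∑' u, W u := by
    rw [← Summable.tsum_finsetSum fun t _ => hBs.indicator _]
    refine (summable_sum fun t _ => hBs.indicator _).tsum_le_tsum (fun u => ?_) hW.summable
    simp only [Set.indicator_apply, Set.mem_compl_iff, mem_coe, ← sum_filter, sum_const,
      nsmul_eq_mul, I, B, W]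
    gcongr
    · exact hb0 _
    · exact_mod_cast card_filter_notMem_Ioc_sub_le N u
  have hN' : (N : 𝕜) ≠ 0 := Nat.cast_ne_zero.2 hN.ne'
  calc ‖∑' u, g u - (N : 𝕜)⁻¹ • ∑ t ∈ range N, ∑ s ∈ range N, g (t - s)‖
      = ‖(N : 𝕜)⁻¹ • ∑ t ∈ range N, (∑' u, g u - ∑ s ∈ range N, g (t - s))‖ := by
        rw [sum_sub_distrib, sum_const, card_range, smul_sub, ← Nat.cast_smul_eq_nsmul 𝕜,
          smul_smul, inv_mul_cancel₀ hN', one_smul]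
    _ ≤ (N : ℝ)⁻¹ * ∑ t ∈ range N, ‖∑' u, g u - ∑ s ∈ range N, g (t - s)‖ := by
        rw [norm_smul, norm_inv, RCLike.norm_natCast]
        gcongr
        exact norm_sum_le _ _
    _ ≤ (N : ℝ)⁻¹ * ∑' u, W u := by
        gcongr
        exact (sum_le_sum hdiag).trans hcount
    _ = 2 * (∑' m : ℕ, (m : ℝ) * b m) / N := by rw [hW.tsum_eq]; ring

theorem matCLM_eq_toEuclideanCLM {dy : ℕ} (A : Matrix (Fin dy) (Fin dy) ℂ) :
    matCLM A = toEuclideanCLM (n := Fin dy) (𝕜 := ℂ) A := rfl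

theorem norm_matCLM_conjTranspose {dy : ℕ} (A : Matrix (Fin dy) (Fin dy) ℂ) :
    ‖matCLM Aᴴ‖ = ‖matCLM A‖ := by
  rw [matCLM_eq_toEuclideanCLM, matCLM_eq_toEuclideanCLM, ← star_eq_conjTranspose, map_star]
  exact ContinuousLinearMap.adjoint.norm_map _

theorem norm_matCLM_map_ofReal_eq_natAbs {dy : ℕ} {R : ℤ → Matrix (Fin dy) (Fin dy) ℝ}
    (hsym : ∀ t, R (-t) = (R t)ᵀ) (u : ℤ) :
    ‖matCLM ((R u).map fun x => (x : ℂ))‖ = ‖matCLM ((R u.natAbs).map fun x => (x : ℂ))‖ := by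
  obtain ⟨n, rfl | rfl⟩ := Int.eq_nat_or_neg u
  · rfl
  · have hct : ((R n)ᵀ).map (fun x => (x : ℂ)) = ((R n).map fun x => (x : ℂ))ᴴ := by
      ext i j
      simp
    rw [hsym, Int.natAbs_neg, Int.natAbs_natCast, hct, norm_matCLM_conjTranspose]

theorem exp_neg_mul_I_mul_conj (x y : ℝ) :
    Complex.exp (-(x : ℂ) * Complex.I) * conj (Complex.exp (-(y : ℂ) * Complex.I)) =
      Complex.exp (-((x - y : ℝ) : ℂ) * Complex.I) := by
  rw [← Complex.exp_conj, ← Complex.exp_add]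
  simp only [map_mul, map_neg, Complex.conj_ofReal, Complex.conj_I, Complex.ofReal_sub]
  ring_nf

theorem dftNoise_mul_conj {dy : ℕ} {Ω : Type*} (N : ℕ) (v : ℤ → Ω → Fin dy → ℝ) (k : ℕ)
    (ω : Ω) (i i' : Fin dy) :
    dftNoise N v k ω i * conj (dftNoise N v k ω i') =
      (N : ℂ)⁻¹ * ∑ t ∈ range N, ∑ s ∈ range N,
        Complex.exp (-((2 * Real.pi * k * (((t : ℤ) - s : ℤ) : ℝ) / N : ℝ) : ℂ) * Complex.I) *
          ((v t ω i * v s ω i' : ℝ) : ℂ) := by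
  have hsqrt : ((Real.sqrt N : ℝ) : ℂ)⁻¹ * ((Real.sqrt N : ℝ) : ℂ)⁻¹ = (N : ℂ)⁻¹ := by
    rw [← mul_inv, ← Complex.ofReal_mul, Real.mul_self_sqrt N.cast_nonneg, Complex.ofReal_natCast]
  simp only [dftNoise, map_mul, map_inv₀, Complex.conj_ofReal, map_sum]
  rw [mul_mul_mul_comm, hsqrt, sum_mul_sum]
  congr 1
  refine sum_congr rfl fun t _ => sum_congr rfl fun s _ => ?_
  rw [mul_mul_mul_comm, exp_neg_mul_I_mul_conj]
  push_cast
  ring_nf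

theorem integral_dftNoise_mul_conj {dy : ℕ} {Ω : Type*} [MeasurableSpace Ω] {μ : Measure Ω}
    {v : ℤ → Ω → Fin dy → ℝ} {R : ℤ → Matrix (Fin dy) (Fin dy) ℝ}
    (hint : ∀ t s : ℤ, ∀ i i', Integrable (fun ω => v t ω i * v s ω i') μ)
    (hR : ∀ t s : ℤ, ∀ i i', ∫ ω, v t ω i * v s ω i' ∂μ = R (t - s) i i') (N k : ℕ) :
    Matrix.of (fun i i' => ∫ ω, dftNoise N v k ω i * conj (dftNoise N v k ω i') ∂μ) =
      (N : ℂ)⁻¹ • ∑ t ∈ range N, ∑ s ∈ range N,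
        Complex.exp (-((2 * Real.pi * k * (((t : ℤ) - s : ℤ) : ℝ) / N : ℝ) : ℂ) * Complex.I) •
          (R (t - s)).map fun x => (x : ℂ) := by
  ext i i'
  have hterm : ∀ t s : ℕ, Integrable (fun ω =>
      Complex.exp (-((2 * Real.pi * k * (((t : ℤ) - s : ℤ) : ℝ) / N : ℝ) : ℂ) * Complex.I) *
        ((v t ω i * v s ω i' : ℝ) : ℂ)) μ := fun t s => (hint t s i i').ofReal.const_mul _
  simp only [Matrix.of_apply, dftNoise_mul_conj, Matrix.smul_apply, Matrix.sum_apply,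
    Matrix.map_apply, smul_eq_mul]
  rw [integral_const_mul, integral_finsetSum _
    fun t _ => integrable_finsetSum _ fun s _ => hterm t s]
  congr 1
  refine sum_congr rfl fun t _ => ?_
  rw [integral_finsetSum _ fun s _ => hterm t s]
  refine sum_congr rfl fun s _ => ?_
  rw [integral_const_mul, integral_complex_ofReal, hR]

theorem stochastic_transient_general {dy : ℕ}
    (Ω : Type*) [MeasurableSpace Ω] (μ : Measure Ω)
    (v : ℤ → Ω → Fin dy → ℝ)
    (R : ℤ → Matrix (Fin dy) (Fin dy) ℝ)
    (hint : ∀ s t : ℤ, ∀ i i' : Fin dy, Integrable (fun ω => v s ω i * v (s - t) ω i') μ)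
    (hR : ∀ s t : ℤ, ∀ i i' : Fin dy, ∫ ω, v s ω i * v (s - t) ω i' ∂μ = R t i i')
    (hsym : ∀ t : ℤ, R (-t) = (R t)ᵀ)
    (hstar : Summable fun t : ℕ => (t : ℝ) * ‖matCLM ((R t).map fun x => (x : ℂ))‖)
    (N : ℕ) (hN : 0 < N) :
    ∀ k < N,
      ‖(∑' t : ℤ, Complex.exp (-((2 * Real.pi * k * t / N : ℝ) : ℂ) * Complex.I) •
            matCLM ((R t).map fun x => (x : ℂ))) -
          matCLM (Matrix.of fun i i' =>
            ∫ ω, dftNoise N v k ω i * (starRingEnd ℂ) (dftNoise N v k ω i') ∂μ)‖ ≤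
        2 * (∑' t : ℕ, (t : ℝ) * ‖matCLM ((R t).map fun x => (x : ℂ))‖) / N := by
  intro k _
  have hphase : ∀ u : ℤ, ‖Complex.exp (-((2 * Real.pi * k * u / N : ℝ) : ℂ) * Complex.I)‖ = 1 :=
    fun u => by simp [Complex.norm_exp]
  have hgb : ∀ u : ℤ, ‖Complex.exp (-((2 * Real.pi * k * u / N : ℝ) : ℂ) * Complex.I) •
      matCLM ((R u).map fun x => (x : ℂ))‖ ≤ ‖matCLM ((R u.natAbs).map fun x => (x : ℂ))‖ :=
    fun u => by rw [norm_smul, hphase, one_mul, norm_matCLM_map_ofReal_eq_natAbs hsym]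
  have hlag : ∀ t s : ℤ, ∀ i i', ∫ ω, v t ω i * v s ω i' ∂μ = R (t - s) i i' :=
    fun t s i i' => by simpa only [sub_sub_cancel] using hR t (t - s) i i'
  have hmom : ∀ t s : ℤ, ∀ i i', Integrable (fun ω => v t ω i * v s ω i') μ :=
    fun t s i i' => by simpa only [sub_sub_cancel] using hint t (t - s) i i'
  rw [integral_dftNoise_mul_conj hmom hlag, matCLM_eq_toEuclideanCLM]
  simp only [map_sum, map_smul, ← matCLM_eq_toEuclideanCLM]
  exact norm_tsum_sub_inv_smul_sum_range_sub_le hgb hstar hN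

/-- **stochastic transient.** For a wide-sense stationary process
with strictly stable autocorrelation, the aliased power spectrum
`Φ_{v,N}(k) = E[V_k V_k*]` satisfies
`sup_{k∈[N]} ‖Φ_v(k) − Φ_{v,N}(k)‖_op ≤ 2‖R‖_⋆/N`. -/
theorem stochastic_transient {dy : ℕ}
    (Ω : Type*) [MeasurableSpace Ω] (μ : Measure Ω) [IsProbabilityMeasure μ]
    (v : ℤ → Ω → Fin dy → ℝ)
    (hmeas : ∀ t i, Measurable fun ω => v t ω i)
    (R : ℤ → Matrix (Fin dy) (Fin dy) ℝ)
    (hint : ∀ s t : ℤ, ∀ i i' : Fin dy, Integrable (fun ω => v s ω i * v (s - t) ω i') μ)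
    (hR : ∀ s t : ℤ, ∀ i i' : Fin dy, ∫ ω, v s ω i * v (s - t) ω i' ∂μ = R t i i')
    (hsym : ∀ t : ℤ, R (-t) = (R t)ᵀ)
    (hstar : Summable fun t : ℕ => (t : ℝ) * ‖matCLM ((R t).map fun x => (x : ℂ))‖)
    (N : ℕ) (hN : 0 < N) :
    ∀ k < N,
      ‖(∑' t : ℤ, Complex.exp (-((2 * Real.pi * k * t / N : ℝ) : ℂ) * Complex.I) •
            matCLM ((R t).map fun x => (x : ℂ))) -
          matCLM (Matrix.of fun i i' =>
            ∫ ω, dftNoise N v k ω i * (starRingEnd ℂ) (dftNoise N v k ω i') ∂μ)‖ ≤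
        2 * (∑' t : ℕ, (t : ℝ) * ‖matCLM ((R t).map fun x => (x : ℂ))‖) / N :=
  stochastic_transient_general Ω μ v R hint hR hsym hstar N hN
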